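/- In the gadget graph G' constructed from G (each edge uv replaced by a 4-vertex zero-weight path uv⁺–uv⁻–vu⁻–vu⁺, plus for each turn (uv,vw) an edge of weight α(uv,vw) between vu⁺ and vw⁺), perfect matchings of G' correspond bijectively to collections of vertex-disjoint simple cycles in G, with the matching weight equal to the total turn cost along the cycles, provided G has maximum degree 3. -/

import Mathlib

/-!
Write a vertex of the gadget as `(d, b)` with `d` a dart of `G`. In a perfect matching the vertex
`(d, false)` is matched either along the middle edge of its path or to `(d, true)`; so `(d, true)`
is matched by a turn edge exactly when the edge of `d` is selected. At a vertex `v` the turn edges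
therefore pair up the selected darts leaving `v`, whose number is thus even, and at most
`deg v ≤ 3`: it is `0` or `2`, and when it is `2` the two darts are matched to each other. Hence
the matched turn edges are exactly the turns of the selected cycles, which gives the weight
identity. Conversely, an edge set with all degrees `0` or `2` is realised by matching the middle
edge of each selected path, the two outer edges of every other path, and at each vertex the two
selected darts to each other.
-/

open Finset
open scoped Classical

variable {V : Type*} [Fintype V] [DecidableEq V]

/-- The gadget graph `G'` on vertex set `G.Dart × Bool`: for each edge `uv` of `G`,
the dart-vertices `(u→v,+), (u→v,−), (v→u,−), (v→u,+)` form a path of three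
zero-weight edges, and for each turn `(uv, vw)` at `v` there is a weighted edge
between `(v→u,+)` and `(v→w,+)`.  (`+` is `true`, `−` is `false`.) -/
def Gadget (G : SimpleGraph V) : SimpleGraph (G.Dart × Bool) :=
  SimpleGraph.fromRel (fun x y =>
    (x.1 = y.1 ∧ x.2 ≠ y.2) ∨
    (y.1 = x.1.symm ∧ x.2 = false ∧ y.2 = false) ∨
    (x.2 = true ∧ y.2 = true ∧ x.1.toProd.1 = y.1.toProd.1 ∧ x.1.toProd.2 ≠ y.1.toProd.2))

/-- The weight of a subgraph (matching) `M` of the gadget graph: each matched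
weighted edge `(v→u,+)–(v→w,+)` contributes the turn cost `α(uv, vw)`; path
edges contribute `0`.  (The factor `1/2` accounts for counting ordered pairs.) -/
noncomputable def gadgetWeight (G : SimpleGraph V) [DecidableRel G.Adj]
    (α : Sym2 V → Sym2 V → ℝ) (M : (Gadget G).Subgraph) : ℝ :=
  (1 / 2) * ∑ x : G.Dart × Bool, ∑ y : G.Dart × Bool,
    if M.Adj x y ∧ x.2 = true ∧ y.2 = true then α x.1.edge y.1.edge else 0

/-- The set of edges of `G` selected by `M`: those whose middle path edge
`(u→v,−)–(v→u,−)` belongs to `M`. -/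
noncomputable def selectedEdges (G : SimpleGraph V) [DecidableRel G.Adj]
    (M : (Gadget G).Subgraph) : Finset (Sym2 V) :=
  G.edgeFinset.filter (fun e => ∃ d : G.Dart, d.edge = e ∧ M.Adj (d, false) (d.symm, false))

/-- `S` is the edge set of a vertex-disjoint union of simple cycles in `G`:
every vertex is incident to either `0` or `2` edges of `S`. -/
def IsCycleUnion (G : SimpleGraph V) [DecidableRel G.Adj] (S : Finset (Sym2 V)) : Prop :=
  ↑S ⊆ G.edgeSet ∧
    ∀ v, (G.incidenceFinset v ∩ S).card = 0 ∨ (G.incidenceFinset v ∩ S).card = 2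

/-- The total turn cost along the cycles with edge set `S`: at each vertex with two
incident `S`-edges `e ≠ f`, the cycle uses the turn `(e, f)`. -/
noncomputable def cycleTurnCost (G : SimpleGraph V) [DecidableRel G.Adj]
    (α : Sym2 V → Sym2 V → ℝ) (S : Finset (Sym2 V)) : ℝ :=
  (1 / 2) * ∑ v : V, ∑ e ∈ G.incidenceFinset v ∩ S, ∑ f ∈ G.incidenceFinset v ∩ S,
    if e ≠ f then α e f else 0

namespace SimpleGraph

variable {G : SimpleGraph V}

omit [Fintype V] [DecidableEq V] in
lemma Dart.eq_of_fst_eq_of_edge_eq {d d' : G.Dart} (hfst : d.fst = d'.fst)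
    (hedge : d.edge = d'.edge) : d = d' := by
  obtain h | rfl := (dart_edge_eq_iff d d').mp hedge
  · exact h
  · exact absurd hfst.symm d'.fst_ne_snd

omit [Fintype V] [DecidableEq V] in
lemma exists_dart_edge_eq {e : Sym2 V} (he : e ∈ G.edgeSet) : ∃ d : G.Dart, d.edge = e := by
  induction e using Sym2.ind with
  | _ u w => exact ⟨⟨(u, w), he⟩, rfl⟩

variable [DecidableRel G.Adj]

variable (G) in
def dartsAt (S : Finset (Sym2 V)) (v : V) : Finset G.Dart :=
  {d : G.Dart | d.fst = v ∧ d.edge ∈ S}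

@[simp]
lemma mem_dartsAt {S : Finset (Sym2 V)} {v : V} {d : G.Dart} :
    d ∈ G.dartsAt S v ↔ d.fst = v ∧ d.edge ∈ S := by
  simp [dartsAt]

lemma injOn_edge_dartsAt (S : Finset (Sym2 V)) (v : V) :
    Set.InjOn Dart.edge (G.dartsAt S v : Set G.Dart) := fun _ hd _ hd' =>
  Dart.eq_of_fst_eq_of_edge_eq ((mem_dartsAt.mp hd).1.trans (mem_dartsAt.mp hd').1.symm)

lemma incidenceFinset_inter_eq_image (S : Finset (Sym2 V)) (v : V) :
    G.incidenceFinset v ∩ S = (G.dartsAt S v).image Dart.edge := by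
  ext e
  simp only [mem_inter, mem_incidenceFinset, mem_image, mem_dartsAt]
  constructor
  · rintro ⟨⟨he, hve⟩, heS⟩
    obtain ⟨w, rfl⟩ := Sym2.mem_iff_exists.mp hve
    exact ⟨⟨(v, w), he⟩, ⟨rfl, heS⟩, rfl⟩
  · rintro ⟨d, ⟨rfl, hdS⟩, rfl⟩
    exact ⟨⟨d.edge_mem, Sym2.mem_mk_left _ _⟩, hdS⟩

lemma card_incidenceFinset_inter (S : Finset (Sym2 V)) (v : V) :
    #(G.incidenceFinset v ∩ S) = #(G.dartsAt S v) := by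
  rw [incidenceFinset_inter_eq_image, card_image_of_injOn (injOn_edge_dartsAt S v)]

lemma card_dartsAt_le_degree (S : Finset (Sym2 V)) (v : V) : #(G.dartsAt S v) ≤ G.degree v := by
  rw [← dart_fst_fiber_card_eq_degree]
  exact card_le_card fun d hd => by simp_all

end SimpleGraph

namespace Gadget

variable {G : SimpleGraph V} {d d' : G.Dart}

omit [Fintype V] [DecidableEq V]

lemma adj_false_false : (Gadget G).Adj (d, false) (d', false) ↔ d' = d.symm := by
  simp only [Gadget, SimpleGraph.fromRel_adj]
  grind [SimpleGraph.Dart.symm_ne, SimpleGraph.Dart.symm_symm]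

lemma adj_true_false : (Gadget G).Adj (d, true) (d', false) ↔ d = d' := by
  simp only [Gadget, SimpleGraph.fromRel_adj]
  grind

lemma adj_false_true : (Gadget G).Adj (d, false) (d', true) ↔ d = d' := by
  rw [(Gadget G).adj_comm, adj_true_false, eq_comm]

lemma adj_true_true : (Gadget G).Adj (d, true) (d', true) ↔ d.fst = d'.fst ∧ d ≠ d' := by
  simp only [Gadget, SimpleGraph.fromRel_adj, ne_eq, and_true, Bool.true_eq_false, and_false,
    false_or, true_and, SimpleGraph.Dart.ext_iff, Prod.ext_iff]
  grind

end Gadget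

section PerfectMatching

variable {G : SimpleGraph V} [DecidableRel G.Adj] {M : (Gadget G).Subgraph} {d d' : G.Dart}

lemma dart_edge_mem_selectedEdges :
    d.edge ∈ selectedEdges G M ↔ M.Adj (d, false) (d.symm, false) := by
  simp only [selectedEdges, mem_filter, SimpleGraph.mem_edgeFinset, d.edge_mem, true_and,
    SimpleGraph.dart_edge_eq_iff]
  constructor
  · rintro ⟨d', rfl | rfl, h⟩
    exacts [h, by simpa using h.symm]
  · exact fun h => ⟨d, Or.inl rfl, h⟩

namespace SimpleGraph.Subgraph.IsPerfectMatching

variable (hM : M.IsPerfectMatching)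
include hM

lemma dart_edge_mem_selectedEdges_of_adj (h : M.Adj (d, true) (d', true)) :
    d.edge ∈ selectedEdges G M := by
  rw [dart_edge_mem_selectedEdges]
  obtain ⟨⟨e, b⟩, hy, -⟩ := hM.1 (hM.2 (d, false))
  cases b
  · rwa [← Gadget.adj_false_false.mp (M.adj_sub hy)]
  · obtain rfl := Gadget.adj_false_true.mp (M.adj_sub hy)
    simpa using hM.1.eq_of_adj_left hy.symm h

lemma exists_adj_of_dart_edge_mem_selectedEdges (h : d.edge ∈ selectedEdges G M) :
    ∃ d', M.Adj (d, true) (d', true) := by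
  rw [dart_edge_mem_selectedEdges] at h
  obtain ⟨⟨e, b⟩, hy, -⟩ := hM.1 (hM.2 (d, true))
  cases b
  · obtain rfl := Gadget.adj_true_false.mp (M.adj_sub hy)
    simpa using hM.1.eq_of_adj_left hy.symm h
  · exact ⟨e, hy⟩

lemma dart_mem_dartsAt_of_adj (h : M.Adj (d, true) (d', true)) :
    d' ∈ G.dartsAt (selectedEdges G M) d.fst :=
  SimpleGraph.mem_dartsAt.mpr ⟨(Gadget.adj_true_true.mp (M.adj_sub h)).1.symm,
    hM.dart_edge_mem_selectedEdges_of_adj h.symm⟩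

lemma even_card_dartsAt (v : V) : Even #(G.dartsAt (selectedEdges G M) v) := by
  have hmatch : (M.induce ↑((G.dartsAt (selectedEdges G M) v).image (·, true))).IsMatching := by
    intro x hx
    obtain ⟨d, hdv, rfl⟩ := mem_image.mp hx
    obtain ⟨rfl, hd⟩ := SimpleGraph.mem_dartsAt.mp hdv
    obtain ⟨d', hdd'⟩ := hM.exists_adj_of_dart_edge_mem_selectedEdges hd
    exact ⟨(d', true), ⟨mem_image_of_mem _ hdv, mem_image_of_mem _ (hM.dart_mem_dartsAt_of_adj hdd'),
      hdd'⟩, fun y hy => hM.1.eq_of_adj_left hy.2.2 hdd'⟩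
  simpa [card_image_of_injective _ (Prod.mk_left_injective true)] using hmatch.even_card

variable (hmax : ∀ v, G.degree v ≤ 3)
include hmax

lemma card_dartsAt_eq_zero_or_two (v : V) :
    #(G.dartsAt (selectedEdges G M) v) = 0 ∨ #(G.dartsAt (selectedEdges G M) v) = 2 := by
  obtain ⟨k, hk⟩ := hM.even_card_dartsAt v
  have := (SimpleGraph.card_dartsAt_le_degree (selectedEdges G M) v).trans (hmax v)
  omega

lemma adj_true_true_iff :
    M.Adj (d, true) (d', true) ↔
      d.fst = d'.fst ∧ d ≠ d' ∧ d.edge ∈ selectedEdges G M ∧ d'.edge ∈ selectedEdges G M := by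
  refine ⟨fun h => ⟨(Gadget.adj_true_true.mp (M.adj_sub h)).1,
    (Gadget.adj_true_true.mp (M.adj_sub h)).2, hM.dart_edge_mem_selectedEdges_of_adj h,
    hM.dart_edge_mem_selectedEdges_of_adj h.symm⟩, ?_⟩
  rintro ⟨hfst, hne, hd, hd'⟩
  obtain ⟨d'', hdd''⟩ := hM.exists_adj_of_dart_edge_mem_selectedEdges hd
  have hpair : G.dartsAt (selectedEdges G M) d.fst = {d, d'} := by
    refine (eq_of_subset_of_card_le (by simp [insert_subset_iff, *]) ?_).symm
    have := hM.card_dartsAt_eq_zero_or_two hmax d.fst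
    rw [card_pair hne]
    omega
  have hd'' := hM.dart_mem_dartsAt_of_adj hdd''
  rw [hpair, mem_insert, mem_singleton] at hd''
  obtain rfl := hd''.resolve_left (Gadget.adj_true_true.mp (M.adj_sub hdd'')).2.symm
  exact hdd''

lemma isCycleUnion_selectedEdges : IsCycleUnion G (selectedEdges G M) := by
  refine ⟨fun e he => SimpleGraph.mem_edgeFinset.mp (mem_filter.mp he).1, fun v => ?_⟩
  rw [SimpleGraph.card_incidenceFinset_inter]
  exact hM.card_dartsAt_eq_zero_or_two hmax v

end SimpleGraph.Subgraph.IsPerfectMatching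

end PerfectMatching

lemma gadgetWeight_eq_cycleTurnCost {G : SimpleGraph V} [DecidableRel G.Adj]
    (α : Sym2 V → Sym2 V → ℝ) (S : Finset (Sym2 V)) (M : (Gadget G).Subgraph)
    (hM : ∀ d d' : G.Dart,
      M.Adj (d, true) (d', true) ↔ d.fst = d'.fst ∧ d ≠ d' ∧ d.edge ∈ S ∧ d'.edge ∈ S) :
    gadgetWeight G α M = cycleTurnCost G α S := by
  have hinj := SimpleGraph.injOn_edge_dartsAt (G := G) S
  unfold gadgetWeight cycleTurnCost
  congr 1
  calc ∑ x : G.Dart × Bool, ∑ y : G.Dart × Bool,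
        (if M.Adj x y ∧ x.2 = true ∧ y.2 = true then α x.1.edge y.1.edge else 0)
      = ∑ d : G.Dart, ∑ d' : G.Dart,
          if M.Adj (d, true) (d', true) then α d.edge d'.edge else 0 := by
        simp [Fintype.sum_prod_type]
    _ = ∑ v, ∑ d ∈ G.dartsAt S v, ∑ d' ∈ G.dartsAt S v,
          if d ≠ d' then α d.edge d'.edge else 0 := by
        rw [← sum_fiberwise univ fun d : G.Dart => d.fst]
        refine sum_congr rfl fun v _ => ?_
        simp only [SimpleGraph.dartsAt, sum_filter, hM]
        refine sum_congr rfl fun d _ => ?_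
        by_cases hv : d.fst = v
        · by_cases hd : d.edge ∈ S
          · simp only [hv, hd, and_self, if_true]
            refine sum_congr rfl fun d' _ => ?_
            rw [← ite_and]
            exact if_congr (by grind) rfl rfl
          · simp [hd]
        · simp [hv]
    _ = ∑ v, ∑ e ∈ G.incidenceFinset v ∩ S, ∑ f ∈ G.incidenceFinset v ∩ S,
          if e ≠ f then α e f else 0 := by
        refine sum_congr rfl fun v _ => ?_
        rw [SimpleGraph.incidenceFinset_inter_eq_image, sum_image (hinj v)]
        refine sum_congr rfl fun d hd => ?_
        rw [sum_image (hinj v)]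
        refine sum_congr rfl fun d' hd' => ?_
        simp only [ne_eq, (hinj v).eq_iff hd hd']

section CycleMatching

variable (G : SimpleGraph V) (S : Finset (Sym2 V))

omit [Fintype V] [DecidableEq V] in
def cycleMatchingAdj : G.Dart × Bool → G.Dart × Bool → Prop
  | (d, false), (d', false) => d.edge ∈ S ∧ d' = d.symm
  | (d, true), (d', true) => d.fst = d'.fst ∧ d ≠ d' ∧ d.edge ∈ S ∧ d'.edge ∈ S
  | (d, _), (d', _) => d.edge ∉ S ∧ d = d'

omit [Fintype V] [DecidableEq V] in
def cycleMatching : (Gadget G).Subgraph where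
  verts := Set.univ
  Adj := cycleMatchingAdj G S
  adj_sub := by
    rintro ⟨d, _ | _⟩ ⟨d', _ | _⟩ <;>
      simp +contextual [cycleMatchingAdj, Gadget.adj_false_false, Gadget.adj_false_true,
        Gadget.adj_true_false, Gadget.adj_true_true]
  edge_vert _ := Set.mem_univ _
  symm := ⟨by rintro ⟨d, _ | _⟩ ⟨d', _ | _⟩ <;> simp only [cycleMatchingAdj] <;> aesop⟩

omit [Fintype V] [DecidableEq V] in
lemma cycleMatching_adj_true_true {d d' : G.Dart} :
    (cycleMatching G S).Adj (d, true) (d', true) ↔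
      d.fst = d'.fst ∧ d ≠ d' ∧ d.edge ∈ S ∧ d'.edge ∈ S := Iff.rfl

variable {G S} [DecidableRel G.Adj]

lemma selectedEdges_cycleMatching (hS : ↑S ⊆ G.edgeSet) :
    selectedEdges G (cycleMatching G S) = S := by
  ext e
  simp only [selectedEdges, mem_filter, SimpleGraph.mem_edgeFinset]
  constructor
  · rintro ⟨-, d, rfl, hd, -⟩
    exact hd
  · intro he
    obtain ⟨d, rfl⟩ := SimpleGraph.exists_dart_edge_eq (hS he)
    exact ⟨d.edge_mem, d, rfl, he, rfl⟩

lemma IsCycleUnion.existsUnique_ne (hS : IsCycleUnion G S) {d : G.Dart} (hd : d.edge ∈ S) :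
    ∃! d', d' ≠ d ∧ d'.fst = d.fst ∧ d'.edge ∈ S := by
  have hmem : d ∈ G.dartsAt S d.fst := SimpleGraph.mem_dartsAt.mpr ⟨rfl, hd⟩
  have hcard : #((G.dartsAt S d.fst).erase d) = 1 := by
    have := hS.2 d.fst
    have := card_pos.mpr ⟨d, hmem⟩
    rw [SimpleGraph.card_incidenceFinset_inter] at *
    rw [card_erase_of_mem hmem]
    omega
  obtain ⟨p, hp⟩ := card_eq_one.mp hcard
  simp only [eq_singleton_iff_unique_mem, mem_erase, SimpleGraph.mem_dartsAt] at hp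
  exact ⟨p, hp.1, hp.2⟩

lemma cycleMatching_isPerfectMatching (hS : IsCycleUnion G S) :
    (cycleMatching G S).IsPerfectMatching := by
  rw [SimpleGraph.Subgraph.isPerfectMatching_iff]
  rintro ⟨d, b⟩
  by_cases hd : d.edge ∈ S
  · cases b
    · refine ⟨(d.symm, false), ⟨hd, rfl⟩, ?_⟩
      rintro ⟨d', _ | _⟩ h <;> simp_all [cycleMatching, cycleMatchingAdj]
    · obtain ⟨p, hp, huniq⟩ := hS.existsUnique_ne hd
      refine ⟨(p, true), ⟨hp.2.1.symm, hp.1.symm, hd, hp.2.2⟩, ?_⟩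
      rintro ⟨d', _ | _⟩ h
      · simp_all [cycleMatching, cycleMatchingAdj]
      · rw [huniq d' ⟨h.2.1.symm, h.1.symm, h.2.2.2⟩]
  · refine ⟨(d, !b), by cases b <;> exact ⟨hd, rfl⟩, ?_⟩
    rintro ⟨d', _ | _⟩ h <;> cases b <;> simp_all [cycleMatching, cycleMatchingAdj]

end CycleMatching

theorem gadget_matching_iff_cycles_general
    (G : SimpleGraph V) [DecidableRel G.Adj] (hmax : ∀ v, G.degree v ≤ 3)
    (α : Sym2 V → Sym2 V → ℝ) :
    (∀ M : (Gadget G).Subgraph, M.IsPerfectMatching →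
        IsCycleUnion G (selectedEdges G M) ∧
          gadgetWeight G α M = cycleTurnCost G α (selectedEdges G M)) ∧
    (∀ S : Finset (Sym2 V), IsCycleUnion G S →
        ∃ M : (Gadget G).Subgraph, M.IsPerfectMatching ∧ selectedEdges G M = S ∧
          gadgetWeight G α M = cycleTurnCost G α S) := by
  refine ⟨fun M hM => ⟨hM.isCycleUnion_selectedEdges hmax, ?_⟩, fun S hS => ?_⟩
  · exact gadgetWeight_eq_cycleTurnCost α _ M fun _ _ => hM.adj_true_true_iff hmax
  · exact ⟨cycleMatching G S, cycleMatching_isPerfectMatching hS, selectedEdges_cycleMatching hS.1,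
      gadgetWeight_eq_cycleTurnCost α S _ fun _ _ => cycleMatching_adj_true_true G S⟩

/-- Perfect matchings of the gadget graph `G'` correspond to vertex-disjoint unions
of simple cycles in `G` (for `G` of maximum degree 3), with matching weight equal
to the total turn cost along the cycles. -/
theorem gadget_matching_iff_cycles
    (G : SimpleGraph V) [DecidableRel G.Adj] (hmax : ∀ v, G.degree v ≤ 3)
    (α : Sym2 V → Sym2 V → ℝ) (hsym : ∀ e f, α e f = α f e) (hnn : ∀ e f, 0 ≤ α e f) :
    (∀ M : (Gadget G).Subgraph, M.IsPerfectMatching →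
        IsCycleUnion G (selectedEdges G M) ∧
          gadgetWeight G α M = cycleTurnCost G α (selectedEdges G M)) ∧
    (∀ S : Finset (Sym2 V), IsCycleUnion G S →
        ∃ M : (Gadget G).Subgraph, M.IsPerfectMatching ∧ selectedEdges G M = S ∧
          gadgetWeight G α M = cycleTurnCost G α S) :=
  gadget_matching_iff_cycles_general G hmax α
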